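/- Suppose f is worst-case monotone and worst-case submodular, f(∅) = 0, and f(φ) = Q for every φ ∈ U, where Q > 0. Let π^g be a worst-case density-greedy policy, let φ' ∈ U be a worst-case realization of π^g (i.e., φ' minimizes f(ψ(π^g,φ)) over φ ∈ U), and let h be the virtual-time utility interpolant of the execution of π^g under φ'. Let π* be any adaptive policy that covers Q (i.e., f(ψ(π*,φ)) ≥ Q for every φ ∈ U) with c* = c_wc(π*) > 0. Then for every positive integer L, h(L) ≥ (1 − e^{−L/c*}) · Q. -/

import Mathlib

/-!
Let `ψ` be an observation of the greedy policy with `f ψ < Q` and `d` its best worst-case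
density. Run a covering policy `π*` against an adversary that answers every query with a
worst-case state given `ψ` and the answers so far. By worst-case submodularity each query adds at
most `d * c e` to the utility of the union with `ψ`; by worst-case monotonicity and coverage that
union is worth at least `Q`. Hence `Q ≤ f ψ + d * c*`: the greedy slope is at least
`(Q - f ψ) / c*`, so in virtual time the gap `Q - h l` shrinks by a factor
`1 - 1/c* ≤ exp (-1/c*)` per unit, and `h L ≥ (1 - exp (-L/c*)) * Q`.
-/

namespace WCAS

variable {ι O : Type*}

/-- The domain of a partial realization `ψ : ι → Option O`. -/
def dom (ψ : ι → Option O) : Set ι := {e | ψ e ≠ none}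

/-- A (full) realization `φ` is consistent with a partial realization `ψ`. -/
def consistent (φ : ι → O) (ψ : ι → Option O) : Prop :=
  ∀ e o, ψ e = some o → φ e = o

/-- `ψ` is a subrealization of `ψ'` (written `ψ ⊆ ψ'`). -/
def subreal (ψ ψ' : ι → Option O) : Prop :=
  ∀ e o, ψ e = some o → ψ' e = some o

/-- Extend a partial realization `ψ` by observing state `o` for item `e`. -/
def extendPR [DecidableEq ι] (ψ : ι → Option O) (e : ι) (o : O) : ι → Option O :=
  fun x => if x = e then some o else ψ x

/-- The empty partial realization. -/
def emptyPR : ι → Option O := fun _ => none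

/-- View a full realization as a partial realization with full domain. -/
def toPR (φ : ι → O) : ι → Option O := fun e => some (φ e)

/-- `O(e, ψ)`: the set of possible states of item `e` given observation `ψ`,
with respect to the set `U` of possible realizations. -/
def Ostates (U : Set (ι → O)) (e : ι) (ψ : ι → Option O) : Set O :=
  {o | ∃ φ ∈ U, consistent φ ψ ∧ φ e = o}

/-- The worst-case marginal utility `Δwc(e | ψ)` of item `e` on top of `ψ`. -/
noncomputable def Dwc [DecidableEq ι] (f : (ι → Option O) → ℝ) (U : Set (ι → O))
    (e : ι) (ψ : ι → Option O) : ℝ :=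
  sInf ((fun o => f (extendPR ψ e o) - f ψ) '' Ostates U e ψ)

/-- `f` is worst-case monotone. -/
def WCMonotone [DecidableEq ι] (f : (ι → Option O) → ℝ) (U : Set (ι → O)) : Prop :=
  ∀ ψ : ι → Option O, (∃ φ ∈ U, consistent φ ψ) →
    ∀ e, e ∉ dom ψ → 0 ≤ Dwc f U e ψ

/-- `f` is worst-case submodular. -/
def WCSubmodular [DecidableEq ι] (f : (ι → Option O) → ℝ) (U : Set (ι → O)) : Prop :=
  ∀ ψ ψ' : ι → Option O, subreal ψ ψ' → (∃ φ ∈ U, consistent φ ψ') →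
    ∀ e, e ∉ dom ψ' → Dwc f U e ψ' ≤ Dwc f U e ψ

/-- An adaptive policy maps each observation either to an item outside its
domain or to `none` (stop). -/
def ValidPolicy (π : (ι → Option O) → Option ι) : Prop :=
  ∀ ψ e, π ψ = some e → ψ e = none

/-- One step of executing policy `π` under realization `φ`. -/
def stepPolicy [DecidableEq ι] (π : (ι → Option O) → Option ι) (φ : ι → O)
    (ψ : ι → Option O) : ι → Option O :=
  match π ψ with
  | none => ψ
  | some e => extendPR ψ e (φ e)

/-- Executing policy `π` under realization `φ` for `n` steps, starting from the
empty observation. -/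
def runPolicy [DecidableEq ι] (π : (ι → Option O) → Option ι) (φ : ι → O) :
    ℕ → ι → Option O
  | 0 => emptyPR
  | n + 1 => stepPolicy π φ (runPolicy π φ n)

/-- The final partial realization `ψ(π, φ)` produced by executing `π` under `φ`
(a valid policy over a finite ground set terminates within `card ι` steps). -/
def finalPR [DecidableEq ι] [Fintype ι] (π : (ι → Option O) → Option ι) (φ : ι → O) :
    ι → Option O :=
  runPolicy π φ (Fintype.card ι)

open scoped Classical in
/-- The total cost `c(dom ψ)` of the items in the domain of `ψ`. -/
noncomputable def costPR [Fintype ι] (c : ι → ℝ) (ψ : ι → Option O) : ℝ :=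
  ∑ e : ι, if (ψ e).isSome then c e else 0

/-- The worst-case cost `c_wc(π) = max_{φ ∈ U} c(dom ψ(π, φ))`. -/
noncomputable def cwc [DecidableEq ι] [Fintype ι] (c : ι → ℝ) (U : Set (ι → O))
    (π : (ι → Option O) → Option ι) : ℝ :=
  sSup ((fun φ => costPR c (finalPR π φ)) '' U)

/-- The worst-case utility `f_wc(π) = min_{φ ∈ U} f(ψ(π, φ))`. -/
noncomputable def fwc [DecidableEq ι] [Fintype ι] (f : (ι → Option O) → ℝ)
    (U : Set (ι → O)) (π : (ι → Option O) → Option ι) : ℝ :=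
  sInf ((fun φ => f (finalPR π φ)) '' U)

/-- `ψ` is reachable by executing `π` under some realization in `U`. -/
def Reachable [DecidableEq ι] (π : (ι → Option O) → Option ι) (U : Set (ι → O))
    (ψ : ι → Option O) : Prop :=
  ∃ φ ∈ U, ∃ n, runPolicy π φ n = ψ

/-- Policy `π` covers the goal value `Q`: under every realization in `U`,
its final observation has utility at least `Q`. -/
def Covers [DecidableEq ι] [Fintype ι] (f : (ι → Option O) → ℝ) (U : Set (ι → O))
    (π : (ι → Option O) → Option ι) (Q : ℝ) : Prop :=
  ∀ φ ∈ U, Q ≤ f (finalPR π φ)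

/-- The worst-case density-greedy policy for the cover problem with goal `Q`:
it stops at observations with `f ψ ≥ Q`, and at any reachable observation with
`f ψ < Q` it selects an item maximizing `Δwc(e | ψ) / c(e)`. -/
def CoverGreedy [DecidableEq ι] [Fintype ι] (f : (ι → Option O) → ℝ)
    (U : Set (ι → O)) (c : ι → ℝ) (Q : ℝ) (π : (ι → Option O) → Option ι) : Prop :=
  ValidPolicy π ∧
  (∀ ψ : ι → Option O, Q ≤ f ψ → π ψ = none) ∧
  (∀ ψ : ι → Option O, Reachable π U ψ → f ψ < Q →
    ∃ e, e ∉ dom ψ ∧ π ψ = some e ∧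
      ∀ e', e' ∉ dom ψ → Dwc f U e' ψ / c e' ≤ Dwc f U e ψ / c e)

/-- The budgeted worst-case density-greedy policy: at any reachable observation
it picks a density-maximizing item and selects it if the budget permits,
stopping otherwise. -/
def BudgetGreedy [DecidableEq ι] [Fintype ι] (f : (ι → Option O) → ℝ)
    (U : Set (ι → O)) (c : ι → ℝ) (B : ℝ) (π : (ι → Option O) → Option ι) : Prop :=
  ValidPolicy π ∧
  ∀ ψ : ι → Option O, Reachable π U ψ → dom ψ ≠ Set.univ →
    ∃ e, e ∉ dom ψ ∧
      (∀ e', e' ∉ dom ψ → Dwc f U e' ψ / c e' ≤ Dwc f U e ψ / c e) ∧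
      ((costPR c ψ + c e ≤ B ∧ π ψ = some e) ∨ (B < costPR c ψ + c e ∧ π ψ = none))

/-- The relaxed budgeted worst-case density-greedy policy: it keeps selecting
density-maximizing items while the cost spent so far is within the budget
(thus also selecting the first item that makes the total cost exceed the
budget), and stops once the budget has been exceeded. -/
def RelaxedBudgetGreedy [DecidableEq ι] [Fintype ι] (f : (ι → Option O) → ℝ)
    (U : Set (ι → O)) (c : ι → ℝ) (B : ℝ) (π : (ι → Option O) → Option ι) : Prop :=
  ValidPolicy π ∧
  (∀ ψ : ι → Option O, Reachable π U ψ → B < costPR c ψ → π ψ = none) ∧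
  (∀ ψ : ι → Option O, Reachable π U ψ → costPR c ψ ≤ B → dom ψ ≠ Set.univ →
    ∃ e, e ∉ dom ψ ∧ π ψ = some e ∧
      ∀ e', e' ∉ dom ψ → Dwc f U e' ψ / c e' ≤ Dwc f U e ψ / c e)

section PartialRealizations

variable {ι O : Type*}

theorem consistent.mono {φ : ι → O} {ψ ψ' : ι → Option O} (h : consistent φ ψ')
    (hsub : subreal ψ ψ') : consistent φ ψ :=
  fun e o he => h e o (hsub e o he)

variable [DecidableEq ι]

theorem consistent_extendPR {φ : ι → O} {ψ : ι → Option O} (h : consistent φ ψ) (e : ι) :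
    consistent φ (extendPR ψ e (φ e)) := by
  intro x o hx
  by_cases hxe : x = e
  · subst hxe
    simpa [extendPR] using hx
  · exact h x o (by simpa [extendPR, hxe] using hx)

theorem subreal_extendPR {ψ : ι → Option O} {e : ι} (he : ψ e = none) (o : O) :
    subreal ψ (extendPR ψ e o) := by
  intro x o' hx
  have hxe : x ≠ e := by rintro rfl; simp [he] at hx
  simpa [extendPR, hxe] using hx

theorem extendPR_eq_self {ψ : ι → Option O} {e : ι} {o : O} (he : ψ e = some o) :
    extendPR ψ e o = ψ := by
  funext x
  by_cases hxe : x = e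
  · simp [extendPR, hxe, he]
  · simp [extendPR, hxe]

theorem costPR_extendPR [Fintype ι] (c : ι → ℝ) {ψ : ι → Option O} {e : ι} (he : ψ e = none)
    (o : O) : costPR c (extendPR ψ e o) = costPR c ψ + c e := by
  classical
  unfold costPR
  rw [← Finset.sum_erase_add _ _ (Finset.mem_univ e),
    ← Finset.sum_erase_add _ _ (Finset.mem_univ e)]
  have hrest : ∀ x ∈ Finset.univ.erase e, (if (extendPR ψ e o x).isSome then c x else 0) =
      if (ψ x).isSome then c x else 0 := fun x hx => by
    simp [extendPR, Finset.ne_of_mem_erase hx]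
  rw [Finset.sum_congr rfl hrest]
  simp [extendPR, he]

end PartialRealizations

section Union

variable {ι O : Type*}

/-- The observations of `ψ` together with those of `ρ`; where both are defined, `ψ` wins. -/
def unionPR (ψ ρ : ι → Option O) : ι → Option O := fun x => (ψ x).or (ρ x)

theorem subreal_unionPR_left (ψ ρ : ι → Option O) : subreal ψ (unionPR ψ ρ) := by
  intro x o hx
  simp [unionPR, hx]

variable {φ : ι → O} {ψ ρ : ι → Option O}

theorem subreal_unionPR_right (hψ : consistent φ ψ) (hρ : consistent φ ρ) :
    subreal ρ (unionPR ψ ρ) := by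
  intro x o hx
  cases hψx : ψ x with
  | none => simp [unionPR, hψx, hx]
  | some o' => simp [unionPR, hψx, ← hψ x o' hψx, hρ x o hx]

theorem consistent_unionPR (hψ : consistent φ ψ) (hρ : consistent φ ρ) :
    consistent φ (unionPR ψ ρ) := by
  intro x o hx
  cases hψx : ψ x with
  | none => exact hρ x o (by simpa [unionPR, hψx] using hx)
  | some o' => exact hψ x o (by simpa [unionPR, hψx] using hx)

theorem unionPR_emptyPR (ψ : ι → Option O) : unionPR ψ emptyPR = ψ := by
  funext x
  simp [unionPR, emptyPR]

theorem unionPR_extendPR [DecidableEq ι] (hψ : consistent φ ψ) (e : ι) :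
    unionPR ψ (extendPR ρ e (φ e)) = extendPR (unionPR ψ ρ) e (φ e) := by
  funext x
  by_cases hxe : x = e
  · subst hxe
    cases hψx : ψ x with
    | none => simp [unionPR, extendPR, hψx]
    | some o => simp [unionPR, extendPR, hψx, hψ x o hψx]
  · simp [unionPR, extendPR, hxe]

end Union

section Execution

variable {ι O : Type*} [DecidableEq ι] {π : (ι → Option O) → Option ι} {φ φ' : ι → O}

theorem runPolicy_succ_of_eq_none {n : ℕ} (h : π (runPolicy π φ n) = none) :
    runPolicy π φ (n + 1) = runPolicy π φ n := by
  simp [runPolicy, stepPolicy, h]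

theorem runPolicy_succ_of_eq_some {n : ℕ} {e : ι} (h : π (runPolicy π φ n) = some e) :
    runPolicy π φ (n + 1) = extendPR (runPolicy π φ n) e (φ e) := by
  simp [runPolicy, stepPolicy, h]

theorem consistent_runPolicy (π : (ι → Option O) → Option ι) (φ : ι → O) (n : ℕ) :
    consistent φ (runPolicy π φ n) := by
  induction n with
  | zero => intro x o hx; simp [runPolicy, emptyPR] at hx
  | succ n ih =>
    cases h : π (runPolicy π φ n) with
    | none => rwa [runPolicy_succ_of_eq_none h]
    | some e => rw [runPolicy_succ_of_eq_some h]; exact consistent_extendPR ih e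

theorem subreal_runPolicy_succ (hπ : ValidPolicy π) (n : ℕ) :
    subreal (runPolicy π φ n) (runPolicy π φ (n + 1)) := by
  cases h : π (runPolicy π φ n) with
  | none => rw [runPolicy_succ_of_eq_none h]; exact fun _ _ hx => hx
  | some e => rw [runPolicy_succ_of_eq_some h]; exact subreal_extendPR (hπ _ _ h) _

theorem runPolicy_congr (hπ : ValidPolicy π) {n : ℕ} (h : consistent φ' (runPolicy π φ n)) :
    runPolicy π φ' n = runPolicy π φ n := by
  induction n with
  | zero => rfl
  | succ n ih =>
    have hn : runPolicy π φ' n = runPolicy π φ n := ih (h.mono (subreal_runPolicy_succ hπ n))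
    cases hπn : π (runPolicy π φ n) with
    | none => rw [runPolicy_succ_of_eq_none (hn ▸ hπn), hn, runPolicy_succ_of_eq_none hπn]
    | some e =>
      have hφe : φ' e = φ e := h e _ (by simp [runPolicy_succ_of_eq_some hπn, extendPR])
      rw [runPolicy_succ_of_eq_some (hn ▸ hπn), hn, runPolicy_succ_of_eq_some hπn, hφe]

theorem runPolicy_eq_of_trace {m : ℕ} {e' : ℕ → ι} {ψ' : ℕ → ι → Option O}
    (hψ'0 : ψ' 0 = emptyPR) (hsel : ∀ t, t < m → π (ψ' t) = some (e' (t + 1)))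
    (hupd : ∀ t, t < m → ψ' (t + 1) = extendPR (ψ' t) (e' (t + 1)) (φ (e' (t + 1)))) :
    ∀ t, t ≤ m → runPolicy π φ t = ψ' t := by
  intro t
  induction t with
  | zero => intro _; rw [hψ'0]; rfl
  | succ t ih =>
    intro ht
    have hrun := ih (by omega)
    rw [runPolicy_succ_of_eq_some (hrun ▸ hsel t ht), hrun, hupd t ht]

theorem Reachable.exists_consistent {U : Set (ι → O)} {ψ : ι → Option O}
    (h : Reachable π U ψ) : ∃ φ ∈ U, consistent φ ψ := by
  obtain ⟨φ, hφU, n, rfl⟩ := h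
  exact ⟨φ, hφU, consistent_runPolicy π φ n⟩

theorem CoverGreedy.le_of_eq_none [Fintype ι] {f : (ι → Option O) → ℝ} {U : Set (ι → O)}
    {c : ι → ℝ} {Q : ℝ} (hg : CoverGreedy f U c Q π) {ψ : ι → Option O}
    (hψ : Reachable π U ψ) (hstop : π ψ = none) : Q ≤ f ψ := by
  by_contra! hlt
  obtain ⟨e, -, he, -⟩ := hg.2.2 ψ hψ hlt
  simp [hstop] at he

end Execution

section WorstCase

variable {ι O : Type*} [DecidableEq ι] [Finite O] {f : (ι → Option O) → ℝ} {U : Set (ι → O)}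

theorem Dwc_le {e : ι} {ψ : ι → Option O} {o : O} (ho : o ∈ Ostates U e ψ) :
    Dwc f U e ψ ≤ f (extendPR ψ e o) - f ψ :=
  csInf_le ((Set.toFinite _).image _).bddBelow ⟨o, ho, rfl⟩

theorem exists_Dwc_eq {ψ : ι → Option O} (hψ : ∃ φ ∈ U, consistent φ ψ) (e : ι) :
    ∃ o ∈ Ostates U e ψ, f (extendPR ψ e o) - f ψ = Dwc f U e ψ := by
  obtain ⟨φ, hφU, hφ⟩ := hψ
  have hne : ((fun o => f (extendPR ψ e o) - f ψ) '' Ostates U e ψ).Nonempty :=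
    ⟨_, φ e, ⟨φ, hφU, hφ, rfl⟩, rfl⟩
  exact hne.csInf_mem ((Set.toFinite _).image _)

theorem WCMonotone.le_of_subreal [Fintype ι] (hmono : WCMonotone f U) {ψ ψ' : ι → Option O}
    (hsub : subreal ψ ψ') (hψ' : ∃ φ ∈ U, consistent φ ψ') : f ψ ≤ f ψ' := by
  classical
  induction hn : (Finset.univ.filter fun x => ψ x ≠ ψ' x).card generalizing ψ with
  | zero =>
    have hψψ' : ψ = ψ' := funext fun x => by
      by_contra hx
      simp only [Finset.card_eq_zero, Finset.filter_eq_empty_iff] at hn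
      exact hn (Finset.mem_univ x) hx
    rw [hψψ']
  | succ n ih =>
    obtain ⟨e, he⟩ : ∃ e, ψ e ≠ ψ' e := by
      by_contra! h
      simp [h] at hn
    have hψe : ψ e = none := by
      cases hψe : ψ e with
      | none => rfl
      | some o => exact absurd (hψe.trans (hsub e o hψe).symm) he
    obtain ⟨o, ho⟩ : ∃ o, ψ' e = some o := Option.ne_none_iff_exists'.mp (hψe ▸ he).symm
    obtain ⟨φ, hφU, hφ⟩ := hψ'
    have hstep : f ψ ≤ f (extendPR ψ e o) := by
      have h0 := hmono ψ ⟨φ, hφU, hφ.mono hsub⟩ e (by simp [dom, hψe])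
      have h1 := Dwc_le (f := f) ⟨φ, hφU, hφ.mono hsub, hφ e o ho⟩
      linarith
    have hsub' : subreal (extendPR ψ e o) ψ' := by
      intro x o' hx
      by_cases hxe : x = e
      · subst hxe
        simpa [extendPR, ho] using hx
      · exact hsub x o' (by simpa [extendPR, hxe] using hx)
    have hcard : (Finset.univ.filter fun x => extendPR ψ e o x ≠ ψ' x).card = n := by
      have hfilter : (Finset.univ.filter fun x => extendPR ψ e o x ≠ ψ' x) =
          (Finset.univ.filter fun x => ψ x ≠ ψ' x).erase e := by
        ext x
        simp only [Finset.mem_filter, Finset.mem_erase, Finset.mem_univ, true_and]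
        by_cases hxe : x = e
        · simp [extendPR, hxe, ho]
        · simp [extendPR, hxe]
      rw [hfilter, Finset.card_erase_of_mem (by simpa using he), hn, Nat.add_sub_cancel]
    exact hstep.trans (ih hsub' hcard)

end WorstCase

section CoveringPolicy

variable {ι O : Type*} [DecidableEq ι] [Fintype ι] [Finite O]
  {f : (ι → Option O) → ℝ} {U : Set (ι → O)} {c : ι → ℝ} {Q : ℝ} {π : (ι → Option O) → Option ι}

theorem exists_unionPR_runPolicy_le (hc : ∀ e, 0 ≤ c e) (hsub : WCSubmodular f U)
    (hπ : ValidPolicy π) {ψ : ι → Option O} (hψ : ∃ φ ∈ U, consistent φ ψ) {d : ℝ}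
    (hd0 : 0 ≤ d) (hd : ∀ e, ψ e = none → Dwc f U e ψ ≤ d * c e) (n : ℕ) :
    ∃ φ ∈ U, consistent φ ψ ∧
      f (unionPR ψ (runPolicy π φ n)) ≤ f ψ + d * costPR c (runPolicy π φ n) := by
  induction n with
  | zero =>
    obtain ⟨φ, hφU, hφ⟩ := hψ
    refine ⟨φ, hφU, hφ, ?_⟩
    simp [runPolicy, unionPR_emptyPR, costPR, emptyPR]
  | succ n ih =>
    obtain ⟨φ, hφU, hφψ, hle⟩ := ih
    have hφρ := consistent_runPolicy π φ n
    cases hπρ : π (runPolicy π φ n) with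
    | none => exact ⟨φ, hφU, hφψ, by rwa [runPolicy_succ_of_eq_none hπρ]⟩
    | some e =>
      have hρe : runPolicy π φ n e = none := hπ _ _ hπρ
      obtain ⟨_, ⟨φw, hφwU, hφwμ, rfl⟩, hworst⟩ :=
        exists_Dwc_eq (f := f) ⟨φ, hφU, consistent_unionPR hφψ hφρ⟩ e
      have hwψ : consistent φw ψ := hφwμ.mono (subreal_unionPR_left _ _)
      have hrun : runPolicy π φw n = runPolicy π φ n :=
        runPolicy_congr hπ (hφwμ.mono (subreal_unionPR_right hφψ hφρ))
      have hgain : f (extendPR (unionPR ψ (runPolicy π φ n)) e (φw e)) -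
          f (unionPR ψ (runPolicy π φ n)) ≤ d * c e := by
        cases hψe : ψ e with
        | some o =>
          rw [extendPR_eq_self (by simp [unionPR, hψe, hwψ e o hψe])]
          simpa using mul_nonneg hd0 (hc e)
        | none =>
          rw [hworst]
          refine (hsub _ _ (subreal_unionPR_left _ _) ⟨φ, hφU, consistent_unionPR hφψ hφρ⟩ e
            (by simp [dom, unionPR, hψe, hρe])).trans (hd e hψe)
      refine ⟨φw, hφwU, hwψ, ?_⟩
      rw [runPolicy_succ_of_eq_some (hrun ▸ hπρ), hrun, unionPR_extendPR hwψ,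
        costPR_extendPR c hρe]
      linarith

theorem Covers.le_add_mul_cwc (hcov : Covers f U π Q) (hc : ∀ e, 0 ≤ c e)
    (hmono : WCMonotone f U) (hsub : WCSubmodular f U) (hπ : ValidPolicy π)
    {ψ : ι → Option O} (hψ : ∃ φ ∈ U, consistent φ ψ) {d : ℝ} (hd0 : 0 ≤ d)
    (hd : ∀ e, ψ e = none → Dwc f U e ψ ≤ d * c e) :
    Q ≤ f ψ + d * cwc c U π := by
  obtain ⟨φ, hφU, hφψ, hle⟩ := exists_unionPR_runPolicy_le hc hsub hπ hψ hd0 hd (Fintype.card ι)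
  have hφρ := consistent_runPolicy π φ (Fintype.card ι)
  have hcost : costPR c (finalPR π φ) ≤ cwc c U π :=
    le_csSup ((Set.toFinite U).image _).bddAbove ⟨φ, hφU, rfl⟩
  calc Q ≤ f (finalPR π φ) := hcov φ hφU
    _ ≤ f (unionPR ψ (finalPR π φ)) :=
      hmono.le_of_subreal (subreal_unionPR_right hφψ hφρ) ⟨φ, hφU, consistent_unionPR hφψ hφρ⟩
    _ ≤ f ψ + d * costPR c (finalPR π φ) := hle
    _ ≤ f ψ + d * cwc c U π := by gcongr

theorem CoverGreedy.sub_div_cwc_le_density (hg : CoverGreedy f U c Q π) (hc : ∀ e, 0 < c e)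
    (hmono : WCMonotone f U) (hsub : WCSubmodular f U) {πs : (ι → Option O) → Option ι}
    (hπs : ValidPolicy πs) (hcov : Covers f U πs Q) (hcs : 0 < cwc c U πs)
    {ψ : ι → Option O} (hψ : Reachable π U ψ) {e : ι} (he : π ψ = some e) :
    (Q - f ψ) / cwc c U πs ≤ Dwc f U e ψ / c e := by
  have hlt : f ψ < Q := by
    by_contra! hge
    simp [hg.2.1 ψ hge] at he
  obtain ⟨e₀, -, he₀, hmax⟩ := hg.2.2 ψ hψ hlt
  obtain rfl : e₀ = e := Option.some.inj (he₀.symm.trans he)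
  have hd0 : 0 ≤ Dwc f U e₀ ψ / c e₀ :=
    div_nonneg (hmono ψ hψ.exists_consistent e₀ (by simp [dom, hg.1 ψ e₀ he])) (hc e₀).le
  have hQ := hcov.le_add_mul_cwc (fun e => (hc e).le) hmono hsub hπs hψ.exists_consistent hd0
    fun x hx => (div_le_iff₀ (hc x)).1 (hmax x (by simp [dom, hx]))
  rw [div_le_iff₀ hcs]
  linarith

end CoveringPolicy

section Interpolant

theorem exists_segment {s : ℕ → ℕ} (hs0 : s 0 = 0) {l : ℕ} :
    ∀ {m : ℕ}, l < s m → ∃ t < m, s t ≤ l ∧ l < s (t + 1)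
  | 0, hl => by simp [hs0] at hl
  | m + 1, hl => by
    by_cases hlm : l < s m
    · obtain ⟨t, ht, hst, hlt⟩ := exists_segment hs0 hlm
      exact ⟨t, by omega, hst, hlt⟩
    · exact ⟨m, by omega, by omega, hl⟩

theorem le_exp_neg_div_mul_of_step {x : ℕ → ℝ} {C Q : ℝ} (hQ : 0 ≤ Q) (h0 : x 0 ≤ Q)
    (hstep : ∀ l, 0 < x (l + 1) → 0 ≤ x l ∧ x (l + 1) ≤ (1 - 1 / C) * x l) (l : ℕ) :
    x l ≤ Real.exp (-l / C) * Q := by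
  induction l with
  | zero => simpa using h0
  | succ l ih =>
    rcases le_or_gt (x (l + 1)) 0 with hle | hpos
    · exact hle.trans (by positivity)
    obtain ⟨hxl, hdecay⟩ := hstep l hpos
    have hexp : Real.exp (-(l + 1 : ℕ) / C) = Real.exp (-1 / C) * Real.exp (-l / C) := by
      rw [← Real.exp_add]
      push_cast
      ring_nf
    calc x (l + 1) ≤ (1 - 1 / C) * x l := hdecay
      _ ≤ Real.exp (-1 / C) * x l := by
        gcongr
        linarith [Real.add_one_le_exp (-1 / C), neg_div C 1]
      _ ≤ Real.exp (-1 / C) * (Real.exp (-l / C) * Q) := by gcongr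
      _ = Real.exp (-(l + 1 : ℕ) / C) * Q := by rw [hexp, mul_assoc]

variable {m : ℕ} {w s : ℕ → ℕ} {g h : ℕ → ℝ}

theorem interpolant_eq_on_segment (hw : ∀ t, 0 < w t)
    (hs : ∀ t, s t = ∑ i ∈ Finset.range t, w (i + 1)) (hg0 : g 0 = 0) (hh0 : h 0 = 0)
    (hhmid : ∀ l t : ℕ, 1 ≤ l → l ≤ s m → 1 ≤ t → t ≤ m → s (t - 1) < l → l ≤ s t →
      h l = g (t - 1) + (((l : ℝ) - (s (t - 1) : ℝ)) / (w t : ℝ)) * (g t - g (t - 1)))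
    {t l : ℕ} (ht : t < m) (hl₁ : s t ≤ l) (hl₂ : l ≤ s (t + 1)) :
    h l = g t + (((l : ℝ) - (s t : ℝ)) / (w (t + 1) : ℝ)) * (g (t + 1) - g t) := by
  have hs_succ : ∀ t, s (t + 1) = s t + w (t + 1) := fun t => by
    rw [hs, hs, Finset.sum_range_succ]
  have hsmono : Monotone s := monotone_nat_of_le_succ fun t => by rw [hs_succ]; omega
  rcases hl₁.lt_or_eq with hlt | rfl
  · simpa using hhmid l (t + 1) (by omega) (hl₂.trans (hsmono ht)) (by omega) ht
      (by simpa using hlt) hl₂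
  cases t with
  | zero => simp [hs, hh0, hg0]
  | succ k =>
    have hk := hhmid (s (k + 1)) (k + 1) (by have := hw (k + 1); rw [hs_succ]; omega)
      (hsmono ht.le) (by omega) ht.le (by simp [hs_succ, hw]) le_rfl
    have hwk : (w (k + 1) : ℝ) ≠ 0 := by exact_mod_cast (hw (k + 1)).ne'
    simp only [Nat.add_sub_cancel, hs_succ k, Nat.cast_add, add_sub_cancel_left,
      div_self hwk, one_mul] at hk
    rw [sub_self, zero_div, zero_mul, add_zero, hs_succ k, hk]
    ring

theorem one_sub_exp_mul_le_interpolant {Q C : ℝ} (hQ : 0 ≤ Q) (hC : 0 < C) (hw : ∀ t, 0 < w t)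
    (hs : ∀ t, s t = ∑ i ∈ Finset.range t, w (i + 1)) (hg0 : g 0 = 0) (hh0 : h 0 = 0)
    (hhmid : ∀ l t : ℕ, 1 ≤ l → l ≤ s m → 1 ≤ t → t ≤ m → s (t - 1) < l → l ≤ s t →
      h l = g (t - 1) + (((l : ℝ) - (s (t - 1) : ℝ)) / (w t : ℝ)) * (g t - g (t - 1)))
    (hhtail : ∀ l : ℕ, s m < l → h l = g m) (hgm : Q ≤ g m)
    (hgmono : ∀ t, t < m → g t ≤ g (t + 1))
    (hslope : ∀ t, t < m → (Q - g t) / C ≤ (g (t + 1) - g t) / w (t + 1)) (l : ℕ) :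
    (1 - Real.exp (-l / C)) * Q ≤ h l := by
  suffices Q - h l ≤ Real.exp (-l / C) * Q by linarith
  refine le_exp_neg_div_mul_of_step (x := fun l => Q - h l) hQ (by simp [hh0]) (fun l hpos => ?_) l
  have hl : l < s m := by
    by_contra! hml
    have := hhtail (l + 1) (by omega)
    linarith
  obtain ⟨t, ht, hst, hlt⟩ := exists_segment (by simp [hs]) hl
  have hwt : (0 : ℝ) < w (t + 1) := by exact_mod_cast hw (t + 1)
  have hhl := interpolant_eq_on_segment hw hs hg0 hh0 hhmid ht hst hlt.le
  have hhl' := interpolant_eq_on_segment hw hs hg0 hh0 hhmid ht (by omega) hlt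
  have hrise : h (l + 1) = h l + (g (t + 1) - g t) / w (t + 1) := by
    rw [hhl, hhl']
    push_cast
    field_simp
    ring
  have hgt : g t ≤ h l := by
    have hls : (0 : ℝ) ≤ l - s t := sub_nonneg.2 (by exact_mod_cast hst)
    rw [hhl, le_add_iff_nonneg_right]
    exact mul_nonneg (div_nonneg hls hwt.le) (sub_nonneg.2 (hgmono t ht))
  have hslope' : (Q - h l) / C ≤ (g (t + 1) - g t) / w (t + 1) :=
    (div_le_div_of_nonneg_right (by linarith) hC.le).trans (hslope t ht)
  have hrise_nonneg : 0 ≤ (g (t + 1) - g t) / w (t + 1) :=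
    div_nonneg (by linarith [hgmono t ht]) hwt.le
  constructor
  · linarith
  · rw [hrise]
    linarith [show (1 - 1 / C) * (Q - h l) = Q - h l - (Q - h l) / C by ring]

end Interpolant

theorem stmt_8_general {ι O : Type*} [Fintype ι] [DecidableEq ι] [Fintype O]
    (U : Set (ι → O))
    (c : ι → ℕ) (hc : ∀ e, 0 < c e)
    (f : (ι → Option O) → ℝ)
    (hmono : WCMonotone f U) (hsub : WCSubmodular f U)
    (Q : ℝ) (hQ : 0 < Q) (hempty : f emptyPR = 0)
    (πg : (ι → Option O) → Option ι)
    (hg : CoverGreedy f U (fun e => (c e : ℝ)) Q πg)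
    (φ' : ι → O) (hφ'U : φ' ∈ U)
    -- the execution trace of π^g under φ'
    (m : ℕ) (e' : ℕ → ι) (ψ' : ℕ → ι → Option O)
    (hψ'0 : ψ' 0 = emptyPR)
    (hsel : ∀ t : ℕ, t < m → πg (ψ' t) = some (e' (t + 1)))
    (hupd : ∀ t : ℕ, t < m → ψ' (t + 1) = extendPR (ψ' t) (e' (t + 1)) (φ' (e' (t + 1))))
    (hstop : πg (ψ' m) = none)
    (s : ℕ → ℕ) (hs : ∀ t : ℕ, s t = ∑ i ∈ Finset.range t, c (e' (i + 1)))
    -- the virtual-time utility interpolant h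
    (h : ℕ → ℝ) (hh0 : h 0 = 0)
    (hhmid : ∀ l t : ℕ, 1 ≤ l → l ≤ s m → 1 ≤ t → t ≤ m → s (t - 1) < l → l ≤ s t →
      h l = f (ψ' (t - 1)) +
        (((l : ℝ) - (s (t - 1) : ℝ)) / (c (e' t) : ℝ)) * (f (ψ' t) - f (ψ' (t - 1))))
    (hhtail : ∀ l : ℕ, s m < l → h l = f (ψ' m))
    -- an arbitrary covering policy π*
    (πs : (ι → Option O) → Option ι) (hπs : ValidPolicy πs)
    (hcov : Covers f U πs Q)
    (hcs : 0 < cwc (fun e => (c e : ℝ)) U πs) :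
    ∀ L : ℕ, 0 < L →
      (1 - Real.exp (-(L : ℝ) / cwc (fun e => (c e : ℝ)) U πs)) * Q ≤ h L := by
  have hcR : ∀ e, (0 : ℝ) < c e := fun e => Nat.cast_pos.2 (hc e)
  have hrun : ∀ t, t ≤ m → runPolicy πg φ' t = ψ' t := runPolicy_eq_of_trace hψ'0 hsel hupd
  have hreach : ∀ t, t ≤ m → Reachable πg U (ψ' t) := fun t ht => ⟨φ', hφ'U, t, hrun t ht⟩
  have hgain : ∀ t, t < m → Dwc f U (e' (t + 1)) (ψ' t) ≤ f (ψ' (t + 1)) - f (ψ' t) :=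
    fun t ht => hupd t ht ▸ Dwc_le ⟨φ', hφ'U, hrun t ht.le ▸ consistent_runPolicy πg φ' t, rfl⟩
  have hgmono : ∀ t, t < m → f (ψ' t) ≤ f (ψ' (t + 1)) := fun t ht => by
    have := hmono _ (hreach t ht.le).exists_consistent (e' (t + 1))
      (by simp [dom, hg.1 _ _ (hsel t ht)])
    linarith [hgain t ht]
  have hslope : ∀ t, t < m → (Q - f (ψ' t)) / cwc (fun e => (c e : ℝ)) U πs ≤
      (f (ψ' (t + 1)) - f (ψ' t)) / c (e' (t + 1)) := fun t ht =>
    (hg.sub_div_cwc_le_density hcR hmono hsub hπs hcov hcs (hreach t ht.le) (hsel t ht)).trans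
      (div_le_div_of_nonneg_right (hgain t ht) (hcR _).le)
  intro L _
  exact one_sub_exp_mul_le_interpolant (w := fun t => c (e' t)) (g := fun t => f (ψ' t)) hQ.le hcs
    (fun t => hc _) hs (by rw [hψ'0, hempty]) hh0 hhmid hhtail
    (hg.le_of_eq_none (hreach m le_rfl) hstop) hgmono hslope L

/-- **Theorem 1.** Suppose `f` is worst-case monotone and worst-case submodular,
`f ∅ = 0` and `f φ = Q > 0` for every `φ ∈ U`. Let `π^g` be a worst-case
density-greedy policy, `φ'` a worst-case realization of `π^g`, and `h` the
virtual-time utility interpolant of the execution of `π^g` under `φ'` (given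
below by its trace `e' 1, …, e' m`, `∅ = ψ' 0 ⊆ … ⊆ ψ' m` and partial sums
`s`). Then for every adaptive policy `π*` covering `Q` with worst-case cost
`c* > 0` and every positive integer `L`, `h L ≥ (1 − e^{−L/c*}) · Q`. -/
theorem stmt_8 {ι O : Type*} [Fintype ι] [Nonempty ι] [DecidableEq ι] [Fintype O]
    (U : Set (ι → O)) (hU : U.Nonempty)
    (c : ι → ℕ) (hc : ∀ e, 0 < c e)
    (f : (ι → Option O) → ℝ) (hf0 : ∀ ψ, 0 ≤ f ψ)
    (hmono : WCMonotone f U) (hsub : WCSubmodular f U)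
    (Q : ℝ) (hQ : 0 < Q) (hempty : f emptyPR = 0)
    (hfull : ∀ φ ∈ U, f (toPR φ) = Q)
    (πg : (ι → Option O) → Option ι)
    (hg : CoverGreedy f U (fun e => (c e : ℝ)) Q πg)
    (φ' : ι → O) (hφ'U : φ' ∈ U)
    (hworst : ∀ φ ∈ U, f (finalPR πg φ') ≤ f (finalPR πg φ))
    -- the execution trace of π^g under φ'
    (m : ℕ) (e' : ℕ → ι) (ψ' : ℕ → ι → Option O)
    (hψ'0 : ψ' 0 = emptyPR)
    (hsel : ∀ t : ℕ, t < m → πg (ψ' t) = some (e' (t + 1)))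
    (hupd : ∀ t : ℕ, t < m → ψ' (t + 1) = extendPR (ψ' t) (e' (t + 1)) (φ' (e' (t + 1))))
    (hstop : πg (ψ' m) = none)
    (s : ℕ → ℕ) (hs : ∀ t : ℕ, s t = ∑ i ∈ Finset.range t, c (e' (i + 1)))
    -- the virtual-time utility interpolant h
    (h : ℕ → ℝ) (hh0 : h 0 = 0)
    (hhmid : ∀ l t : ℕ, 1 ≤ l → l ≤ s m → 1 ≤ t → t ≤ m → s (t - 1) < l → l ≤ s t →
      h l = f (ψ' (t - 1)) +
        (((l : ℝ) - (s (t - 1) : ℝ)) / (c (e' t) : ℝ)) * (f (ψ' t) - f (ψ' (t - 1))))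
    (hhtail : ∀ l : ℕ, s m < l → h l = f (ψ' m))
    -- an arbitrary covering policy π*
    (πs : (ι → Option O) → Option ι) (hπs : ValidPolicy πs)
    (hcov : Covers f U πs Q)
    (hcs : 0 < cwc (fun e => (c e : ℝ)) U πs) :
    ∀ L : ℕ, 0 < L →
      (1 - Real.exp (-(L : ℝ) / cwc (fun e => (c e : ℝ)) U πs)) * Q ≤ h L :=
  stmt_8_general U c hc f hmono hsub Q hQ hempty πg hg φ' hφ'U m e' ψ' hψ'0 hsel hupd hstop s hs h
    hh0 hhmid hhtail πs hπs hcov hcs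

end WCAS
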